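/- For the JHC q-addition, e_q(a) E_q(b) equals the formal exponential of the q-sum: e_q(a) E_q(b) = ∑_{n=0}^{∞} (a ⊕_q b)^n / (q;q)_n, where (a ⊕_q b)^n = ∑_{k=0}^{n} [n choose k]_q q^{k(k-1)/2} a^{n-k} b^k. -/

import Mathlib

open Finset Complex

noncomputable def qPoch (a q : ℂ) (n : ℕ) : ℂ :=
  ∏ j ∈ Finset.range n, (1 - a * q ^ j)

noncomputable def qBinom (q : ℂ) (n k : ℕ) : ℂ :=
  qPoch q q n / (qPoch q q k * qPoch q q (n - k))

noncomputable def cauchyP (q x y : ℂ) (n : ℕ) : ℂ :=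
  ∏ j ∈ Finset.range n, (x - q ^ j * y)

noncomputable def Fpoly (q x y z : ℂ) (n : ℕ) : ℂ :=
  (-1) ^ n * q ^ (-((n * (n - 1) / 2 : ℕ) : ℤ)) *
    ∑ k ∈ Finset.range (n + 1),
      qBinom q n k * (-1) ^ k * q ^ (k * (k - 1) / 2) * cauchyP q y x (n - k) * z ^ k

noncomputable def Pq (q ξ y ζ z : ℂ) (n : ℕ) : ℂ :=
  ∑ k ∈ Finset.range (n + 1),
    qBinom q n k * q ^ (k * (k - 1) / 2) * cauchyP q ξ y (n - k) * (-1) ^ k * cauchyP q ζ z k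

noncomputable def psiH (q a x y : ℂ) (n : ℕ) : ℂ := Fpoly q x (a * x) y n

noncomputable def qExp (q z : ℂ) : ℂ := ∑' k : ℕ, z ^ k / qPoch q q k

noncomputable def qExpE (q z : ℂ) : ℂ := ∑' k : ℕ, q ^ (k * (k - 1) / 2) * z ^ k / qPoch q q k

noncomputable def thetaOp (q : ℂ) (g : ℂ → ℂ → ℂ) : ℂ → ℂ → ℂ :=
  fun x y => (g (q⁻¹ * x) y - g x (q * y)) / (q⁻¹ * x - y)

/-!
Both series converge absolutely by the ratio test: the ratio of consecutive terms is
`a / (1 - q ^ (n + 1)) → a` for `e_q(a)` and `q ^ n b / (1 - q ^ (n + 1)) → 0` for `E_q(b)`.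
Their Cauchy product has `n`-th term `∑ₖ q^(k(k-1)/2) bᵏ a^(n-k) / ((q;q)ₖ (q;q)_(n-k))`,
which is `(a ⊕_q b)ⁿ / (q;q)ₙ` because `[n choose k]_q / (q;q)ₙ = 1 / ((q;q)ₖ (q;q)_(n-k))`.
-/

open Filter Topology

theorem summable_norm_of_norm_succ_le_of_tendsto {E : Type*} [SeminormedAddCommGroup E]
    {f : ℕ → E} {r : ℕ → ℝ} {l : ℝ} (hl : l < 1) (hr : Tendsto r atTop (𝓝 l))
    (hf : ∀ n, ‖f (n + 1)‖ ≤ r n * ‖f n‖) : Summable fun n => ‖f n‖ := by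
  obtain ⟨l', hll', hl'⟩ := exists_between hl
  refine summable_of_ratio_norm_eventually_le hl' ?_
  filter_upwards [hr.eventually (gt_mem_nhds hll')] with n hn
  simp only [norm_norm]
  exact (hf n).trans (mul_le_mul_of_nonneg_right hn.le (norm_nonneg _))

theorem qPoch_succ (q : ℂ) (n : ℕ) : qPoch q q (n + 1) = qPoch q q n * (1 - q * q ^ n) :=
  Finset.prod_range_succ _ n

theorem qPoch_ne_zero {q : ℂ} (hq : ‖q‖ < 1) (n : ℕ) : qPoch q q n ≠ 0 := by
  refine Finset.prod_ne_zero_iff.2 fun j _ h => ?_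
  have hlt : ‖q * q ^ j‖ < 1 := by
    rw [← pow_succ']
    simpa [norm_pow] using pow_lt_one₀ (norm_nonneg q) hq j.succ_ne_zero
  rw [← sub_eq_zero.1 h, norm_one] at hlt
  exact hlt.false

theorem qBinom_div_qPoch {q : ℂ} {n : ℕ} (hn : qPoch q q n ≠ 0) (k : ℕ) :
    qBinom q n k / qPoch q q n = (qPoch q q k * qPoch q q (n - k))⁻¹ :=
  div_div_cancel_left' hn

theorem tendsto_norm_one_sub_mul_pow {q : ℂ} (hq : ‖q‖ < 1) :
    Tendsto (fun n : ℕ => ‖1 - q * q ^ n‖) atTop (𝓝 1) := by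
  have h : Tendsto (fun n : ℕ => q * q ^ n) atTop (𝓝 0) := by
    simpa using (tendsto_pow_atTop_nhds_zero_of_norm_lt_one hq).const_mul q
  simpa using ((tendsto_const_nhds (x := (1 : ℂ))).sub h).norm

theorem summable_norm_qExp_term {q a : ℂ} (hq : ‖q‖ < 1) (ha : ‖a‖ < 1) :
    Summable fun k : ℕ => ‖a ^ k / qPoch q q k‖ := by
  refine summable_norm_of_norm_succ_le_of_tendsto (r := fun n => ‖a‖ / ‖1 - q * q ^ n‖) ha
    (by simpa only [div_one, Pi.div_def] using
      tendsto_const_nhds.div (tendsto_norm_one_sub_mul_pow hq) one_ne_zero)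
    fun n => le_of_eq ?_
  rw [qPoch_succ, pow_succ]
  simp only [norm_div, norm_mul]
  ring

theorem summable_norm_qExpE_term {q : ℂ} (hq : ‖q‖ < 1) (b : ℂ) :
    Summable fun k : ℕ => ‖q ^ (k * (k - 1) / 2) * b ^ k / qPoch q q k‖ := by
  have hnum : Tendsto (fun n : ℕ => ‖q‖ ^ n * ‖b‖) atTop (𝓝 0) := by
    simpa using (tendsto_pow_atTop_nhds_zero_of_lt_one (norm_nonneg q) hq).mul_const ‖b‖
  refine summable_norm_of_norm_succ_le_of_tendsto
    (r := fun n => ‖q‖ ^ n * ‖b‖ / ‖1 - q * q ^ n‖) one_pos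
    (by simpa only [zero_div, Pi.div_def] using
      hnum.div (tendsto_norm_one_sub_mul_pow hq) one_ne_zero)
    fun n => le_of_eq ?_
  have hexp : (n + 1) * (n + 1 - 1) / 2 = n * (n - 1) / 2 + n := by
    rw [← Nat.choose_two_right, ← Nat.choose_two_right, Nat.choose_succ_succ,
      Nat.choose_one_right, Nat.add_comm]
  rw [qPoch_succ, hexp, pow_add, pow_succ b]
  simp only [norm_div, norm_mul, norm_pow]
  ring

theorem qExp_mul_qExpE_eq_qAdd_series (q a b : ℂ) (hq : ‖q‖ < 1)
    (ha : ‖a‖ < 1) :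
    HasSum (fun n : ℕ =>
        (∑ k ∈ Finset.range (n + 1),
            qBinom q n k * q ^ (k * (k - 1) / 2) * a ^ (n - k) * b ^ k) / qPoch q q n)
      (qExp q a * qExpE q b) := by
  have hprod := hasSum_sum_range_mul_of_summable_norm
    (summable_norm_qExpE_term hq b) (summable_norm_qExp_term hq ha)
  rw [qExp, qExpE, mul_comm]
  refine hprod.congr_fun fun n => ?_
  rw [Finset.sum_div]
  refine Finset.sum_congr rfl fun k _ => ?_
  calc qBinom q n k * q ^ (k * (k - 1) / 2) * a ^ (n - k) * b ^ k / qPoch q q n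
      = qBinom q n k / qPoch q q n * (q ^ (k * (k - 1) / 2) * a ^ (n - k) * b ^ k) := by ring
    _ = _ := by rw [qBinom_div_qPoch (qPoch_ne_zero hq n)]; ring
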